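/- arXiv:1701.03753 — 2 statements merged into one kernel-verified Lean document; each statement's English description precedes it below -/
import Mathlib

section
/- Let R be a real random variable with density f_R(r) = 2π λ_M r exp(−π λ_M r²) for r > 0 (λ_M > 0), define P_C = min{P_max^C, P_o β^{−η} R^{η α_M}} with P_o, P_max^C, β > 0, α_M > 0, η ∈ (0,1], r_o = (P_max^C/P_o)^{1/(α_M η)} β^{1/α_M}, and let t > 0 and r > 0. Then E[ 1/(1 + t P_C β r^{−α_M}) ] = e^{−π λ_M r_o²}/(1 + t P_max^C β r^{−α_M}) + ∫₀^{π λ_M r_o²} ( e^{ν} + e^{ν} t P_o β^{1−η} (ν/(π λ_M))^{η α_M/2} r^{−α_M} )^{−1} dν. -/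
/-!
Substituting `ν = π λ_M s²` turns the Rayleigh density `2 π λ_M s e^{-π λ_M s²}` into the
exponential density `e^{-ν}`. The power control saturates at `P_max^C` exactly when `R ≥ r_o`,
so beyond `r_o` the integrand is constant and contributes `P(R > r_o) = e^{-π λ_M r_o²}` times
that constant, while on `(0, r_o]` the substitution produces the integral over `[0, π λ_M r_o²]`.
-/

open MeasureTheory Set intervalIntegral Real Filter

theorem integral_comp_eq_setIntegral_Ioi_of_map_eq_withDensity {Ω : Type*} [MeasurableSpace Ω]
    {μ : Measure Ω} {X : Ω → ℝ} (hX : AEMeasurable X μ) {ρ : ℝ → ℝ} (hρ : Measurable ρ)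
    (hρ_nonneg : ∀ s, 0 < s → 0 ≤ ρ s)
    (hmap : μ.map X = volume.withDensity (fun s => ENNReal.ofReal (if 0 < s then ρ s else 0)))
    {g : ℝ → ℝ} (hg : Measurable g) :
    ∫ ω, g (X ω) ∂μ = ∫ s in Ioi 0, ρ s * g s := by
  rw [← integral_map hX hg.aestronglyMeasurable, hmap,
    integral_withDensity_eq_integral_toReal_smul
      (Measurable.ite measurableSet_Ioi hρ measurable_const).ennreal_ofReal
      (.of_forall fun _ => ENNReal.ofReal_lt_top),
    ← MeasureTheory.integral_indicator measurableSet_Ioi]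
  congr with s
  by_cases hs : 0 < s <;> simp [hs, hρ_nonneg s]

theorem hasDerivAt_neg_exp_neg_mul_sq (a x : ℝ) :
    HasDerivAt (fun s => -exp (-(a * s ^ 2))) (2 * a * x * exp (-(a * x ^ 2))) x := by
  refine (((hasDerivAt_pow 2 x).const_mul a).fun_neg.exp).fun_neg.congr_deriv ?_
  push_cast
  ring

theorem tendsto_neg_exp_neg_mul_sq_atTop {a : ℝ} (ha : 0 < a) :
    Tendsto (fun s => -exp (-(a * s ^ 2))) atTop (nhds 0) := by
  simpa using (tendsto_exp_atBot.comp (tendsto_neg_atTop_atBot.comp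
    ((tendsto_pow_atTop two_ne_zero).const_mul_atTop ha))).neg

theorem rayleigh_nonneg {a b : ℝ} (ha : 0 ≤ a) (hb : 0 ≤ b) :
    ∀ x ∈ Ioi b, 0 ≤ 2 * a * x * exp (-(a * x ^ 2)) := fun x hx => by
  have : 0 < x := hb.trans_lt hx
  positivity

theorem integrableOn_Ioi_rayleigh {a b : ℝ} (ha : 0 < a) (hb : 0 ≤ b) :
    IntegrableOn (fun s => 2 * a * s * exp (-(a * s ^ 2))) (Ioi b) :=
  integrableOn_Ioi_deriv_of_nonneg' (fun x _ => hasDerivAt_neg_exp_neg_mul_sq a x)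
    (rayleigh_nonneg ha.le hb) (tendsto_neg_exp_neg_mul_sq_atTop ha)

theorem integral_Ioi_rayleigh {a b : ℝ} (ha : 0 < a) (hb : 0 ≤ b) :
    ∫ s in Ioi b, 2 * a * s * exp (-(a * s ^ 2)) = exp (-(a * b ^ 2)) := by
  rw [integral_Ioi_of_hasDerivAt_of_nonneg' (fun x _ => hasDerivAt_neg_exp_neg_mul_sq a x)
    (rayleigh_nonneg ha.le hb) (tendsto_neg_exp_neg_mul_sq_atTop ha)]
  ring

theorem mapsTo_const_mul_sq_Icc {a b : ℝ} (ha : 0 ≤ a) :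
    MapsTo (fun s => a * s ^ 2) (Icc 0 b) (Icc 0 (a * b ^ 2)) := fun s ⟨hs0, hsb⟩ =>
  ⟨by positivity, mul_le_mul_of_nonneg_left (pow_le_pow_left₀ hs0 hsb 2) ha⟩

theorem integral_rayleigh_mul_comp_const_mul_sq {a b : ℝ} (ha : 0 ≤ a) (hb : 0 ≤ b) {h : ℝ → ℝ}
    (hh : ContinuousOn h (Icc 0 (a * b ^ 2))) :
    ∫ s in 0..b, 2 * a * s * exp (-(a * s ^ 2)) * h (a * s ^ 2)
      = ∫ ν in 0..a * b ^ 2, exp (-ν) * h ν := by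
  have := integral_comp_mul_deriv' (a := 0) (b := b) (f := fun s => a * s ^ 2)
    (f' := fun s => 2 * a * s) (g := fun ν => exp (-ν) * h ν)
    (fun x _ => by simpa [mul_comm, mul_left_comm] using (hasDerivAt_pow 2 x).const_mul a)
    (by fun_prop)
    (((continuous_exp.comp continuous_neg).continuousOn).mul hh |>.mono (by
      rw [uIcc_of_le hb]; exact (mapsTo_const_mul_sq_Icc ha).image_subset))
  simp only [Function.comp, zero_pow two_ne_zero, mul_zero] at this
  rw [← this]
  congr 1 with s
  ring

theorem setIntegral_Ioi_rayleigh_mul {a b C : ℝ} (ha : 0 < a) (hb : 0 ≤ b) {g h : ℝ → ℝ}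
    (hh : ContinuousOn h (Icc 0 (a * b ^ 2)))
    (hg_head : EqOn g (fun s => h (a * s ^ 2)) (Ioc 0 b)) (hg_tail : EqOn g (fun _ => C) (Ioi b)) :
    ∫ s in Ioi 0, 2 * a * s * exp (-(a * s ^ 2)) * g s
      = exp (-(a * b ^ 2)) * C + ∫ ν in 0..a * b ^ 2, exp (-ν) * h ν := by
  have hhead_eq : EqOn (fun s => 2 * a * s * exp (-(a * s ^ 2)) * g s)
      (fun s => 2 * a * s * exp (-(a * s ^ 2)) * h (a * s ^ 2)) (Ioc 0 b) := fun s hs => by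
    simp only [hg_head hs]
  have htail_eq : EqOn (fun s => 2 * a * s * exp (-(a * s ^ 2)) * g s)
      (fun s => 2 * a * s * exp (-(a * s ^ 2)) * C) (Ioi b) := fun s hs => by
    simp only [hg_tail hs]
  have hhead_cont : ContinuousOn (fun s => 2 * a * s * exp (-(a * s ^ 2)) * h (a * s ^ 2))
      (Icc 0 b) :=
    (by fun_prop : Continuous fun s => 2 * a * s * exp (-(a * s ^ 2))).continuousOn.mul
      (hh.comp (by fun_prop) (mapsTo_const_mul_sq_Icc ha.le))
  have hhead_int : IntegrableOn (fun s => 2 * a * s * exp (-(a * s ^ 2)) * g s) (Ioc 0 b) :=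
    IntegrableOn.congr_fun (hhead_cont.integrableOn_Icc.mono_set Ioc_subset_Icc_self)
      hhead_eq.symm measurableSet_Ioc
  have htail_int : IntegrableOn (fun s => 2 * a * s * exp (-(a * s ^ 2)) * g s) (Ioi b) :=
    IntegrableOn.congr_fun
    ((integrableOn_Ioi_rayleigh ha hb).mul_const C) htail_eq.symm measurableSet_Ioi
  rw [← Ioc_union_Ioi_eq_Ioi hb,
    setIntegral_union (Ioc_disjoint_Ioi le_rfl) measurableSet_Ioi hhead_int htail_int,
    setIntegral_congr_fun measurableSet_Ioc hhead_eq,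
    setIntegral_congr_fun measurableSet_Ioi htail_eq, ← integral_of_le hb,
    integral_rayleigh_mul_comp_const_mul_sq ha.le hb hh, MeasureTheory.integral_mul_const,
    integral_Ioi_rayleigh ha hb, add_comm]

theorem continuousOn_inv_one_add_mul_div_rpow {a c q : ℝ} (ha : 0 ≤ a) (hc : 0 ≤ c)
    (hq : 0 ≤ q) : ContinuousOn (fun ν => (1 + c * (ν / a) ^ q)⁻¹) (Ici 0) :=
  ContinuousOn.inv₀ (Continuous.continuousOn (by fun_prop (disch := exact hq))) fun ν hν => by
    have := hν.out
    positivity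

theorem min_mul_rpow_of_le_cutoff {M k p ro s : ℝ} (hk : 0 ≤ k) (hp : 0 ≤ p)
    (hcut : k * ro ^ p = M) (hs0 : 0 ≤ s) (hs : s ≤ ro) : min M (k * s ^ p) = k * s ^ p :=
  min_eq_right (hcut ▸ by gcongr)

theorem min_mul_rpow_of_cutoff_le {M k p ro s : ℝ} (hk : 0 ≤ k) (hp : 0 ≤ p)
    (hcut : k * ro ^ p = M) (hro : 0 ≤ ro) (hs : ro ≤ s) : min M (k * s ^ p) = M :=
  min_eq_left (hcut ▸ by gcongr)

theorem mul_rpow_neg_mul_cutoff_rpow_eq {Po Pmax β αM η : ℝ} (hPo : 0 < Po) (hPmax : 0 ≤ Pmax)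
    (hβ : 0 < β) (hαM : αM ≠ 0) (hη : η ≠ 0) :
    Po * β ^ (-η) * ((Pmax / Po) ^ (1 / (αM * η)) * β ^ (1 / αM)) ^ (η * αM) = Pmax := by
  rw [mul_rpow (by positivity) (by positivity), ← rpow_mul (by positivity), ← rpow_mul hβ.le,
    show 1 / (αM * η) * (η * αM) = 1 by field_simp, show 1 / αM * (η * αM) = η by field_simp,
    rpow_one, rpow_neg hβ.le]
  field_simp

theorem cellular_interferer_laplace_general {Ω : Type*} [MeasurableSpace Ω]
    (μ : Measure Ω)
    (R : Ω → ℝ) (hR : Measurable R)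
    (lamM : ℝ) (hlam : 0 < lamM)
    (hdist : Measure.map R μ = (volume : Measure ℝ).withDensity
      (fun s => ENNReal.ofReal
        (if 0 < s then 2 * Real.pi * lamM * s * Real.exp (-(Real.pi * lamM * s ^ 2)) else 0)))
    (Po PmaxC β αM η : ℝ) (hPo : 0 < Po) (hPmax : 0 < PmaxC) (hβ : 0 < β) (hαM : 0 < αM)
    (hη : 0 < η)
    (PC : Ω → ℝ) (hPC : ∀ ω, PC ω = min PmaxC (Po * β ^ (-η) * R ω ^ (η * αM)))
    (ro : ℝ) (hro : ro = (PmaxC / Po) ^ (1 / (αM * η)) * β ^ (1 / αM))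
    (t r : ℝ) (ht : 0 < t) (hr : 0 < r) :
    ∫ ω, 1 / (1 + t * PC ω * β * r ^ (-αM)) ∂μ
      = Real.exp (-(Real.pi * lamM * ro ^ 2)) / (1 + t * PmaxC * β * r ^ (-αM))
        + ∫ ν in (0:ℝ)..(Real.pi * lamM * ro ^ 2),
            (Real.exp ν + Real.exp ν * t * Po * β ^ (1 - η)
              * (ν / (Real.pi * lamM)) ^ (η * αM / 2) * r ^ (-αM))⁻¹ := by
  set a := π * lamM with ha_def
  have ha : 0 < a := by positivity
  have hro0 : 0 < ro := hro ▸ by positivity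
  have hcut : Po * β ^ (-η) * ro ^ (η * αM) = PmaxC :=
    hro ▸ mul_rpow_neg_mul_cutoff_rpow_eq hPo hPmax.le hβ hαM.ne' hη.ne'
  set g := fun s => 1 / (1 + t * min PmaxC (Po * β ^ (-η) * s ^ (η * αM)) * β * r ^ (-αM))
  set h := fun ν => (1 + t * Po * β ^ (1 - η) * r ^ (-αM) * (ν / a) ^ (η * αM / 2))⁻¹
  have hh : ContinuousOn h (Icc 0 (a * ro ^ 2)) :=
    (continuousOn_inv_one_add_mul_div_rpow ha.le (by positivity) (by positivity)).mono
      Icc_subset_Ici_self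
  have hhead : EqOn g (fun s => h (a * s ^ 2)) (Ioc 0 ro) := fun s ⟨hs0, hs⟩ => by
    have hsq : (a * s ^ 2 / a) ^ (η * αM / 2) = s ^ (η * αM) := by
      rw [mul_div_cancel_left₀ _ ha.ne', ← rpow_natCast, ← rpow_mul hs0.le]
      ring_nf
    simp only [g, h, hsq, min_mul_rpow_of_le_cutoff (by positivity) (by positivity) hcut hs0.le hs,
      one_div, sub_eq_add_neg, rpow_add hβ, rpow_one]
    ring_nf
  have htail : EqOn g (fun _ => 1 / (1 + t * PmaxC * β * r ^ (-αM))) (Ioi ro) := fun s hs => by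
    simp only [g, min_mul_rpow_of_cutoff_le (by positivity) (by positivity) hcut hro0.le hs.out.le]
  calc ∫ ω, 1 / (1 + t * PC ω * β * r ^ (-αM)) ∂μ
      = ∫ ω, g (R ω) ∂μ := by simp only [hPC, g]
    _ = ∫ s in Ioi 0, 2 * a * s * exp (-(a * s ^ 2)) * g s := by
        rw [integral_comp_eq_setIntegral_Ioi_of_map_eq_withDensity hR.aemeasurable (by fun_prop)
          (fun s hs => by positivity) hdist (by fun_prop)]
        simp only [ha_def, mul_assoc]
    _ = exp (-(a * ro ^ 2)) * (1 / (1 + t * PmaxC * β * r ^ (-αM)))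
          + ∫ ν in 0..a * ro ^ 2, exp (-ν) * h ν :=
        setIntegral_Ioi_rayleigh_mul ha hro0.le hh hhead htail
    _ = _ := by
        congr 1
        · ring
        · refine integral_congr fun ν _ => ?_
          simp only [h, exp_neg, ← mul_inv]
          ring_nf

/-- The quantity `Υ₁` appearing in `Ξ₁(t)` (equation (9)) of Theorem 1 of the paper: with the
Rayleigh nearest-distance density and the open-loop power control
`P_C = min{P_max^C, P_o β^{−η} R^{η α_M}}`, `r_o = (P_max^C/P_o)^{1/(α_M η)} β^{1/α_M}`,
for `t > 0` and `r > 0`,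
`E[1/(1 + t P_C β r^{−α_M})] = e^{−π λ_M r_o²}/(1 + t P_max^C β r^{−α_M})
  + ∫₀^{π λ_M r_o²} (e^ν + e^ν t P_o β^{1−η} (ν/(π λ_M))^{η α_M/2} r^{−α_M})^{−1} dν`. -/
theorem cellular_interferer_laplace {Ω : Type*} [MeasurableSpace Ω]
    (μ : Measure Ω) [IsProbabilityMeasure μ]
    (R : Ω → ℝ) (hR : Measurable R)
    (lamM : ℝ) (hlam : 0 < lamM)
    (hdist : Measure.map R μ = (volume : Measure ℝ).withDensity
      (fun s => ENNReal.ofReal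
        (if 0 < s then 2 * Real.pi * lamM * s * Real.exp (-(Real.pi * lamM * s ^ 2)) else 0)))
    (Po PmaxC β αM η : ℝ) (hPo : 0 < Po) (hPmax : 0 < PmaxC) (hβ : 0 < β) (hαM : 0 < αM)
    (hη : 0 < η) (hη1 : η ≤ 1)
    (PC : Ω → ℝ) (hPC : ∀ ω, PC ω = min PmaxC (Po * β ^ (-η) * R ω ^ (η * αM)))
    (ro : ℝ) (hro : ro = (PmaxC / Po) ^ (1 / (αM * η)) * β ^ (1 / αM))
    (t r : ℝ) (ht : 0 < t) (hr : 0 < r) :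
    ∫ ω, 1 / (1 + t * PC ω * β * r ^ (-αM)) ∂μ
      = Real.exp (-(Real.pi * lamM * ro ^ 2)) / (1 + t * PmaxC * β * r ^ (-αM))
        + ∫ ν in (0:ℝ)..(Real.pi * lamM * ro ^ 2),
            (Real.exp ν + Real.exp ν * t * Po * β ^ (1 - η)
              * (ν / (Real.pi * lamM)) ^ (η * αM / 2) * r ^ (-αM))⁻¹ :=
  cellular_interferer_laplace_general μ R hR lamM hlam hdist Po PmaxC β αM η hPo hPmax hβ hαM hη PC
    hPC ro hro t r ht hr
end

section
/- Let R be a real random variable with density f_R(r) = 2π λ_M r exp(−π λ_M r²) for r > 0 (λ_M > 0), and define P_C = min{P_max^C, P_o β^{−η} R^{η α_M}} with P_o, P_max^C, β > 0, α_M > 0, η ∈ (0,1], and r_o = (P_max^C/P_o)^{1/(α_M η)} β^{1/α_M}. Then E[ln P_C] = ln(P_o β^{−η})·(1 − e^{−π λ_M r_o²}) + ln(P_max^C)·e^{−π λ_M r_o²} − (η α_M/2)·( γ + Γ(0, π λ_M r_o²) + 2 e^{−π λ_M r_o²} ln(r_o) + ln(π λ_M) ), where γ is the Euler–Mascheroni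 constant and Γ(0,T) = ∫_T^∞ e^{−u}/u du. -/
/-!
Substituting `u = π λ_M r²` turns the Rayleigh law of `R` into the standard exponential law.
Below the cutoff `r_o` the power is `P_o β^{-η} R^{η α_M}` and above it `P_max^C`, so
`ln P_C = ln P_max^C + (η α_M / 2) · min (ln (u / T)) 0` with `T = π λ_M r_o²`.
The expectation thus reduces to `∫₀^∞ e^{-u} min (ln (u / T)) 0 du`, the difference of
`∫₀^∞ e^{-u} ln (u / T) du = -γ - ln T` (as `Γ'(1) = -γ`) and
`∫_T^∞ e^{-u} ln (u / T) du = Γ(0, T)` (by parts; the boundary term vanishes at `u = T`).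
-/

open MeasureTheory Set Filter Real

theorem integral_Ioi_exp_neg_mul_log :
    ∫ u in Ioi (0 : ℝ), exp (-u) * log u = -eulerMascheroniConstant := by
  have hGammaIntegral := Complex.hasDerivAt_GammaIntegral (s := 1) (by simp)
  have hGamma : HasDerivAt Complex.GammaIntegral (-eulerMascheroniConstant : ℂ) 1 := by
    refine Complex.hasDerivAt_Gamma_one.congr_of_eventuallyEq ?_
    filter_upwards [(Complex.continuous_re.isOpen_preimage _ isOpen_Ioi).mem_nhds
      (show (1 : ℂ) ∈ Complex.re ⁻¹' Ioi 0 by simp)] with s hs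
    exact (Complex.Gamma_eq_integral hs).symm
  have h := hGammaIntegral.unique hGamma
  simp only [sub_self, Complex.cpow_zero, one_mul, ← Complex.ofReal_mul] at h
  simp_rw [mul_comm (exp _)]
  exact_mod_cast h

theorem abs_log_le_two_mul_rpow_neg_half_add {t : ℝ} (ht : 0 < t) :
    |log t| ≤ 2 * t ^ (-(1 / 2) : ℝ) + t := by
  have hrpow : 0 < t ^ (-(1 / 2) : ℝ) := rpow_pos_of_pos ht _
  rcases le_or_gt 1 t with h | h
  · rw [abs_of_nonneg (log_nonneg h)]
    nlinarith [log_le_sub_one_of_pos ht]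
  · rw [abs_of_nonpos (log_nonpos ht.le h.le)]
    have hlog := log_le_sub_one_of_pos hrpow
    rw [log_rpow ht] at hlog
    nlinarith

theorem integrableOn_Ioi_exp_neg_mul_log :
    IntegrableOn (fun u : ℝ => exp (-u) * log u) (Ioi 0) := by
  have hbound : IntegrableOn
      (fun u : ℝ => 2 * (exp (-u) * u ^ ((1 / 2 : ℝ) - 1)) + exp (-u) * u ^ ((2 : ℝ) - 1))
      (Ioi 0) :=
    ((GammaIntegral_convergent (by norm_num)).const_mul 2).add
      (GammaIntegral_convergent (by norm_num))
  refine hbound.mono' (by fun_prop) ?_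
  filter_upwards [ae_restrict_mem measurableSet_Ioi] with u (hu : 0 < u)
  rw [norm_mul, norm_of_nonneg (exp_pos _).le, norm_eq_abs]
  norm_num only [rpow_one]
  nlinarith [abs_log_le_two_mul_rpow_neg_half_add hu, exp_pos (-u)]

theorem integrableOn_Ioi_exp_neg_mul_log_div (T : ℝ) :
    IntegrableOn (fun u : ℝ => exp (-u) * log (u / T)) (Ioi 0) := by
  rcases eq_or_ne T 0 with rfl | hT
  · simp
  refine (integrableOn_Ioi_exp_neg_mul_log.sub
    ((integrableOn_exp_neg_Ioi 0).const_mul (log T))).congr_fun ?_ measurableSet_Ioi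
  intro u (hu : 0 < u)
  simp only [Pi.sub_apply, log_div hu.ne' hT]
  ring

theorem integrableOn_Ioi_exp_neg_div {T : ℝ} (hT : 0 < T) :
    IntegrableOn (fun u : ℝ => exp (-u) / u) (Ioi T) := by
  refine ((integrableOn_exp_neg_Ioi T).const_mul T⁻¹).mono'
    (by fun_prop : Measurable fun u : ℝ => exp (-u) / u).aestronglyMeasurable ?_
  filter_upwards [ae_restrict_mem measurableSet_Ioi] with u (hu : T < u)
  rw [norm_div, norm_of_nonneg (exp_pos _).le, norm_of_nonneg (hT.trans hu).le, div_eq_inv_mul]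
  gcongr

theorem tendsto_exp_neg_mul_log_div_atTop {T : ℝ} (hT : 0 < T) :
    Tendsto (fun u : ℝ => exp (-u) * log (u / T)) atTop (nhds 0) := by
  have hlin : Tendsto (fun u : ℝ => T⁻¹ * (u * exp (-u))) atTop (nhds 0) := by
    simpa using (tendsto_pow_mul_exp_neg_atTop_nhds_zero 1).const_mul T⁻¹
  refine tendsto_of_tendsto_of_tendsto_of_le_of_le' tendsto_const_nhds hlin ?_ ?_
  all_goals filter_upwards [eventually_ge_atTop T] with u hu
  · exact mul_nonneg (exp_pos _).le (log_nonneg ((one_le_div hT).mpr hu))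
  · have hlog := log_le_sub_one_of_pos (div_pos (hT.trans_le hu) hT)
    calc exp (-u) * log (u / T) ≤ exp (-u) * (u / T) := by gcongr; linarith
      _ = T⁻¹ * (u * exp (-u)) := by ring

theorem integral_Ioi_exp_neg_mul_log_div {T : ℝ} (hT : 0 < T) :
    ∫ u in Ioi T, exp (-u) * log (u / T) = ∫ u in Ioi T, exp (-u) / u := by
  have hderiv : ∀ u ∈ Ici T, HasDerivAt (fun u => -(exp (-u) * log (u / T)))
      (exp (-u) * log (u / T) - exp (-u) / u) u := by
    intro u (hu : T ≤ u)
    have hu0 : 0 < u := hT.trans_le hu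
    have := ((hasDerivAt_neg u).exp.fun_mul
      (((hasDerivAt_id' u).div_const T).log (div_pos hu0 hT).ne')).fun_neg
    refine this.congr_deriv ?_
    field_simp
    ring
  have hlog_int := (integrableOn_Ioi_exp_neg_mul_log_div T).mono_set (Ioi_subset_Ioi hT.le)
  have hparts := integral_Ioi_of_hasDerivAt_of_tendsto' hderiv
    (hlog_int.sub (integrableOn_Ioi_exp_neg_div hT))
    (by simpa using (tendsto_exp_neg_mul_log_div_atTop hT).neg)
  rw [integral_sub hlog_int (integrableOn_Ioi_exp_neg_div hT)] at hparts
  simpa only [div_self hT.ne', log_one, mul_zero, neg_zero, sub_zero, sub_eq_zero] using hparts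

theorem integral_Ioi_zero_exp_neg_mul_log_div {T : ℝ} (hT : T ≠ 0) :
    ∫ u in Ioi 0, exp (-u) * log (u / T) = -eulerMascheroniConstant - log T := by
  have hsplit : EqOn (fun u : ℝ => exp (-u) * log (u / T))
      (fun u => exp (-u) * log u - log T * exp (-u)) (Ioi 0) := by
    intro u (hu : 0 < u)
    simp only [log_div hu.ne' hT]
    ring
  rw [setIntegral_congr_fun measurableSet_Ioi hsplit,
    integral_sub integrableOn_Ioi_exp_neg_mul_log ((integrableOn_exp_neg_Ioi 0).const_mul _),
    integral_const_mul, integral_Ioi_exp_neg_mul_log, integral_exp_neg_Ioi_zero, mul_one]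

theorem integrableOn_Ioi_exp_neg_mul_min_log_div (T : ℝ) :
    IntegrableOn (fun u : ℝ => exp (-u) * min (log (u / T)) 0) (Ioi 0) := by
  refine Integrable.mono (integrableOn_Ioi_exp_neg_mul_log_div T) (by fun_prop)
    (Eventually.of_forall ?_)
  intro u
  simp only [norm_mul, norm_eq_abs]
  exact mul_le_mul_of_nonneg_left (abs_min_le_max_abs_abs.trans_eq (by simp)) (abs_nonneg _)

theorem integral_Ioi_exp_neg_mul_min_log_div {T : ℝ} (hT : 0 < T) :
    ∫ u in Ioi 0, exp (-u) * min (log (u / T)) 0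
      = -(eulerMascheroniConstant + (∫ u in Ioi T, exp (-u) / u) + log T) := by
  have hIoc : ∫ u in Ioi 0, exp (-u) * min (log (u / T)) 0
      = ∫ u in Ioc 0 T, exp (-u) * log (u / T) := by
    rw [setIntegral_eq_of_subset_of_forall_sdiff_eq_zero measurableSet_Ioi Ioc_subset_Ioi_self]
    · refine setIntegral_congr_fun measurableSet_Ioc fun u ⟨hu0, huT⟩ => ?_
      rw [min_eq_left (log_nonpos (div_nonneg hu0.le hT.le) ((div_le_one hT).mpr huT))]
    · rintro u ⟨hu0, huT⟩
      have hTu : T ≤ u := le_of_not_ge fun h => huT ⟨hu0, h⟩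
      rw [min_eq_right (log_nonneg ((one_le_div hT).mpr hTu)), mul_zero]
  have hunion := setIntegral_union (Ioc_disjoint_Ioi le_rfl) measurableSet_Ioi
    ((integrableOn_Ioi_exp_neg_mul_log_div T).mono_set Ioc_subset_Ioi_self)
    ((integrableOn_Ioi_exp_neg_mul_log_div T).mono_set (Ioi_subset_Ioi hT.le))
  rw [Ioc_union_Ioi_eq_Ioi hT.le, integral_Ioi_zero_exp_neg_mul_log_div hT.ne',
    integral_Ioi_exp_neg_mul_log_div hT] at hunion
  linarith

theorem integral_Ioi_exp_neg_mul_add_mul_min_log_div (A B : ℝ) {T : ℝ} (hT : 0 < T) :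
    ∫ u in Ioi 0, exp (-u) * (A + B * min (log (u / T)) 0)
      = A - B * (eulerMascheroniConstant + (∫ u in Ioi T, exp (-u) / u) + log T) := by
  simp only [mul_add, mul_left_comm (exp _)]
  rw [integral_add ((integrableOn_exp_neg_Ioi 0).mul_const _)
      ((integrableOn_Ioi_exp_neg_mul_min_log_div T).const_mul _),
    integral_mul_const, integral_const_mul, integral_exp_neg_Ioi_zero,
    integral_Ioi_exp_neg_mul_min_log_div hT]
  ring

theorem integral_Ioi_comp_mul_sq {E : Type*} [NormedAddCommGroup E] [NormedSpace ℝ E]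
    (h : ℝ → E) {a : ℝ} (ha : 0 < a) :
    ∫ r in Ioi 0, (2 * a * r) • h (a * r ^ 2) = ∫ u in Ioi 0, h u := by
  have hsq := integral_comp_rpow_Ioi (fun s => h (a * s)) (p := 2) two_ne_zero
  norm_num only [rpow_one, rpow_two] at hsq
  calc ∫ r in Ioi 0, (2 * a * r) • h (a * r ^ 2)
      = a • ∫ r in Ioi 0, (2 * r) • h (a * r ^ 2) := by
        rw [← integral_smul]
        simp only [smul_smul, mul_left_comm a, mul_assoc]
    _ = ∫ u in Ioi 0, h u := by
        rw [hsq, integral_comp_mul_left_Ioi h 0 ha, mul_zero, smul_smul, mul_inv_cancel₀ ha.ne',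
          one_smul]

theorem integral_comp_eq_setIntegral_Ioi_mul_density {Ω : Type*} [MeasurableSpace Ω]
    {μ : Measure Ω} {R : Ω → ℝ} (hR : Measurable R) {ρ : ℝ → ℝ} (hρ : Measurable ρ)
    (hρ_nonneg : ∀ r, 0 < r → 0 ≤ ρ r)
    (hdist : μ.map R = volume.withDensity fun r => ENNReal.ofReal (if 0 < r then ρ r else 0))
    {g : ℝ → ℝ} (hg : Measurable g) :
    ∫ ω, g (R ω) ∂μ = ∫ r in Ioi 0, ρ r * g r := by
  rw [← integral_map hR.aemeasurable hg.aestronglyMeasurable, hdist,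
    integral_withDensity_eq_integral_toReal_smul
      (Measurable.ite measurableSet_Ioi hρ measurable_const).ennreal_ofReal
      (Eventually.of_forall fun _ => ENNReal.ofReal_lt_top),
    ← integral_indicator measurableSet_Ioi]
  congr 1 with r
  by_cases hr : 0 < r
  · simp [hr, ENNReal.toReal_ofReal (hρ_nonneg r hr)]
  · simp [hr]

theorem mul_rpow_neg_mul_cutoff_rpow {P Po β α η : ℝ} (hP : 0 ≤ P) (hPo : 0 < Po) (hβ : 0 < β)
    (hα : α ≠ 0) (hη : η ≠ 0) :
    Po * β ^ (-η) * ((P / Po) ^ (1 / (α * η)) * β ^ (1 / α)) ^ (η * α) = P := by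
  rw [mul_rpow (by positivity) (by positivity), ← rpow_mul (by positivity), ← rpow_mul hβ.le,
    show 1 / (α * η) * (η * α) = 1 by field_simp, show 1 / α * (η * α) = η by field_simp,
    rpow_one, rpow_neg hβ.le]
  field_simp

theorem log_min_mul_rpow {K c ro r P : ℝ} (hK : 0 < K) (hc : 0 ≤ c) (hro : 0 < ro) (hr : 0 < r)
    (hP : K * ro ^ c = P) :
    log (min P (K * r ^ c)) = log P + c * min (log (r / ro)) 0 := by
  subst hP
  rcases le_total r ro with hle | hle
  · rw [min_eq_right (by gcongr),
      min_eq_left (log_nonpos (div_nonneg hr.le hro.le) ((div_le_one hro).mpr hle)),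
      log_mul hK.ne' (by positivity), log_mul hK.ne' (by positivity), log_rpow hr, log_rpow hro,
      log_div hr.ne' hro.ne']
    ring
  · rw [min_eq_left (by gcongr), min_eq_right (log_nonneg ((one_le_div hro).mpr hle))]
    ring

theorem cellular_power_log_moment_general {Ω : Type*} [MeasurableSpace Ω]
    (μ : Measure Ω)
    (R : Ω → ℝ) (hR : Measurable R)
    (lamM : ℝ) (hlam : 0 < lamM)
    (hdist : Measure.map R μ = (volume : Measure ℝ).withDensity
      (fun r => ENNReal.ofReal
        (if 0 < r then 2 * Real.pi * lamM * r * Real.exp (-(Real.pi * lamM * r ^ 2)) else 0)))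
    (Po PmaxC β αM η : ℝ) (hPo : 0 < Po) (hPmax : 0 < PmaxC) (hβ : 0 < β) (hαM : 0 < αM)
    (hη : 0 < η)
    (PC : Ω → ℝ) (hPC : ∀ ω, PC ω = min PmaxC (Po * β ^ (-η) * R ω ^ (η * αM)))
    (ro : ℝ) (hro : ro = (PmaxC / Po) ^ (1 / (αM * η)) * β ^ (1 / αM)) :
    ∫ ω, Real.log (PC ω) ∂μ
      = Real.log (Po * β ^ (-η)) * (1 - Real.exp (-(Real.pi * lamM * ro ^ 2)))
        + Real.log PmaxC * Real.exp (-(Real.pi * lamM * ro ^ 2))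
        - (η * αM / 2) * (Real.eulerMascheroniConstant
            + (∫ u in Set.Ioi (Real.pi * lamM * ro ^ 2), Real.exp (-u) / u)
            + 2 * Real.exp (-(Real.pi * lamM * ro ^ 2)) * Real.log ro
            + Real.log (Real.pi * lamM)) := by
  set a := π * lamM
  set c := η * αM
  set K := Po * β ^ (-η)
  have ha : 0 < a := by positivity
  have hK : 0 < K := by positivity
  have hro0 : 0 < ro := hro ▸ by positivity
  have hcutoff : K * ro ^ c = PmaxC :=
    hro ▸ mul_rpow_neg_mul_cutoff_rpow hPmax.le hPo hβ hαM.ne' hη.ne'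
  have hdensity : ∀ r ∈ Ioi (0 : ℝ),
      2 * π * lamM * r * exp (-(a * r ^ 2)) * log (min PmaxC (K * r ^ c))
        = (2 * a * r) • (exp (-(a * r ^ 2))
          * (log PmaxC + c / 2 * min (log (a * r ^ 2 / (a * ro ^ 2))) 0)) := by
    intro r (hr : 0 < r)
    have hmin : min (2 * log (r / ro)) 0 = 2 * min (log (r / ro)) 0 := by
      rw [mul_min_of_nonneg _ _ zero_le_two, mul_zero]
    rw [log_min_mul_rpow hK (by positivity) hro0 hr hcutoff, mul_div_mul_left _ _ ha.ne',
      ← div_pow, log_pow, Nat.cast_two, hmin, smul_eq_mul]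
    ring
  calc ∫ ω, log (PC ω) ∂μ = ∫ ω, log (min PmaxC (K * R ω ^ c)) ∂μ := by simp_rw [hPC]
    _ = ∫ r in Ioi 0, 2 * π * lamM * r * exp (-(a * r ^ 2)) * log (min PmaxC (K * r ^ c)) :=
        integral_comp_eq_setIntegral_Ioi_mul_density hR (by fun_prop) (fun r hr => by positivity)
          hdist (g := fun r => log (min PmaxC (K * r ^ c))) (by fun_prop)
    _ = ∫ u in Ioi 0, exp (-u) * (log PmaxC + c / 2 * min (log (u / (a * ro ^ 2))) 0) := by
        rw [setIntegral_congr_fun measurableSet_Ioi hdensity, integral_Ioi_comp_mul_sq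
          (fun u => exp (-u) * (log PmaxC + c / 2 * min (log (u / (a * ro ^ 2))) 0)) ha]
    _ = _ := by
        rw [integral_Ioi_exp_neg_mul_add_mul_min_log_div _ _ (by positivity), ← hcutoff,
          log_mul hK.ne' (by positivity), log_rpow hro0, log_mul ha.ne' (by positivity), log_pow]
        push_cast
        ring

/-- The logarithmic moment `E{ln(P_{o,C})}` of equation (48) in Appendix C of the paper: with
the Rayleigh nearest-distance density and the open-loop power control
`P_C = min{P_max^C, P_o β^{−η} R^{η α_M}}`, `r_o = (P_max^C/P_o)^{1/(α_M η)} β^{1/α_M}`,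
`E[ln P_C] = ln(P_o β^{−η})(1 − e^{−π λ_M r_o²}) + ln(P_max^C) e^{−π λ_M r_o²}
  − (η α_M/2)(γ + Γ(0, π λ_M r_o²) + 2 e^{−π λ_M r_o²} ln(r_o) + ln(π λ_M))`,
where `γ` is the Euler–Mascheroni constant and `Γ(0,T) = ∫_T^∞ e^{−u}/u du`. -/
theorem cellular_power_log_moment {Ω : Type*} [MeasurableSpace Ω]
    (μ : Measure Ω) [IsProbabilityMeasure μ]
    (R : Ω → ℝ) (hR : Measurable R)
    (lamM : ℝ) (hlam : 0 < lamM)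
    (hdist : Measure.map R μ = (volume : Measure ℝ).withDensity
      (fun r => ENNReal.ofReal
        (if 0 < r then 2 * Real.pi * lamM * r * Real.exp (-(Real.pi * lamM * r ^ 2)) else 0)))
    (Po PmaxC β αM η : ℝ) (hPo : 0 < Po) (hPmax : 0 < PmaxC) (hβ : 0 < β) (hαM : 0 < αM)
    (hη : 0 < η) (hη1 : η ≤ 1)
    (PC : Ω → ℝ) (hPC : ∀ ω, PC ω = min PmaxC (Po * β ^ (-η) * R ω ^ (η * αM)))
    (ro : ℝ) (hro : ro = (PmaxC / Po) ^ (1 / (αM * η)) * β ^ (1 / αM)) :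
    ∫ ω, Real.log (PC ω) ∂μ
      = Real.log (Po * β ^ (-η)) * (1 - Real.exp (-(Real.pi * lamM * ro ^ 2)))
        + Real.log PmaxC * Real.exp (-(Real.pi * lamM * ro ^ 2))
        - (η * αM / 2) * (Real.eulerMascheroniConstant
            + (∫ u in Set.Ioi (Real.pi * lamM * ro ^ 2), Real.exp (-u) / u)
            + 2 * Real.exp (-(Real.pi * lamM * ro ^ 2)) * Real.log ro
            + Real.log (Real.pi * lamM)) :=
  cellular_power_log_moment_general μ R hR lamM hlam hdist Po PmaxC β αM η hPo hPmax hβ hαM hη PC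
    hPC ro hro
end
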